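/- arXiv:1605.04156 — 4 statements merged into one kernel-verified Lean document; each statement's English description precedes it below -/
import Mathlib

section
/- Let x(t) = (Σ_{i=0}^n ω_i p_i B_i^n(t)) / (Σ_{i=0}^n ω_i B_i^n(t)) be a rational Bézier curve with all weights ω_i > 0, and let y(t) = Σ_{j=0}^m q_j B_j^m(t) be a Bézier curve. Then for all t ∈ [0,1], ‖x(t) − y(t)‖ ≤ max_{0≤i≤m+n} max over admissible j of ‖p_j − q_{i−j}‖, where the inner maximum is over max(0, i−m) ≤ j ≤ min(n, i). -/
open Finset

/-- The Bernstein basis polynomial `B_i^n(t) = C(n,i) t^i (1-t)^(n-i)`. -/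
noncomputable def bern (n i : ℕ) (t : ℝ) : ℝ := (n.choose i : ℝ) * t ^ i * (1 - t) ^ (n - i)

/-- Closed balls are convex: the centre of mass lies in every ball `closedBall (y j) M`, so every
`y j`, and with them their convex combination, lies in the ball of radius `M` around it. -/
theorem Finset.norm_centerMass_sub_sum_smul_le {ι κ E : Type*} [SeminormedAddCommGroup E]
    [NormedSpace ℝ E] {s : Finset ι} {t : Finset κ} {w : ι → ℝ} {v : κ → ℝ} {x : ι → E}
    {y : κ → E} {M : ℝ} (hw₀ : ∀ i ∈ s, 0 ≤ w i) (hw : 0 < ∑ i ∈ s, w i)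
    (hv₀ : ∀ j ∈ t, 0 ≤ v j) (hv : ∑ j ∈ t, v j = 1)
    (hxy : ∀ i ∈ s, ∀ j ∈ t, ‖x i - y j‖ ≤ M) :
    ‖s.centerMass w x - ∑ j ∈ t, v j • y j‖ ≤ M := by
  have hclose : ∀ j ∈ t, y j ∈ Metric.closedBall (s.centerMass w x) M := fun j hj => by
    have : s.centerMass w x ∈ Metric.closedBall (y j) M :=
      (convex_closedBall _ _).centerMass_mem hw₀ hw fun i hi =>
        mem_closedBall_iff_norm.2 (hxy i hi j hj)
    rwa [Metric.mem_closedBall_comm]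
  rw [← dist_eq_norm, dist_comm]
  exact (convex_closedBall _ _).sum_mem hv₀ hv hclose

theorem sum_range_bern (n : ℕ) (t : ℝ) : ∑ i ∈ range (n + 1), bern n i t = 1 := by
  simpa [bernsteinPolynomial, bern, Polynomial.eval_finsetSum] using
    congrArg (Polynomial.eval t) (bernsteinPolynomial.sum ℝ n)

theorem bern_nonneg (n i : ℕ) {t : ℝ} (ht : t ∈ Set.Icc (0 : ℝ) 1) : 0 ≤ bern n i t := by
  obtain ⟨h₀, h₁⟩ := ht
  have : 0 ≤ 1 - t := sub_nonneg.2 h₁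
  unfold bern
  positivity

theorem sum_range_mul_bern_pos (n : ℕ) {ω : ℕ → ℝ} (hω : ∀ i ≤ n, 0 < ω i) {t : ℝ}
    (ht : t ∈ Set.Icc (0 : ℝ) 1) : 0 < ∑ i ∈ range (n + 1), ω i * bern n i t := by
  have hlt : ∑ i ∈ range (n + 1), (0 : ℝ) < ∑ i ∈ range (n + 1), bern n i t := by
    simp [sum_range_bern]
  obtain ⟨i, hi, hpos⟩ := exists_lt_of_sum_lt hlt
  have hi : i ≤ n := Nat.lt_succ_iff.1 (mem_range.1 hi)
  exact sum_pos' (fun j hj => mul_nonneg (hω j (Nat.lt_succ_iff.1 (mem_range.1 hj))).le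
    (bern_nonneg n j ht)) ⟨i, mem_range.2 (Nat.lt_succ_of_le hi), mul_pos (hω i hi) hpos⟩

theorem le_sup_range_sup_Icc {α : Type*} [SemilatticeSup α] [OrderBot α] {m n i j : ℕ}
    (hi : i ≤ n) (hj : j ≤ m) (f : ℕ → ℕ → α) :
    f i j ≤ (range (m + n + 1)).sup fun k => (Icc (k - m) (min n k)).sup fun l => f l (k - l) := by
  have hk : i + j ∈ range (m + n + 1) := mem_range.2 (by omega)
  have hl : i ∈ Icc (i + j - m) (min n (i + j)) := mem_Icc.2 (by omega)
  refine le_trans ?_ (le_sup (f := fun k => (Icc (k - m) (min n k)).sup fun l => f l (k - l)) hk)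
  simpa using le_sup (f := fun l => f l (i + j - l)) hl

theorem rational_bezier_approx_error_bound (d m n : ℕ) (ω : ℕ → ℝ) (hω : ∀ i ≤ n, 0 < ω i)
    (p q : ℕ → EuclideanSpace ℝ (Fin d)) (t : ℝ) (ht : t ∈ Set.Icc (0:ℝ) 1) :
    ‖(∑ i ∈ range (n + 1), ω i * bern n i t)⁻¹ •
        (∑ i ∈ range (n + 1), (ω i * bern n i t) • p i)
      - ∑ j ∈ range (m + 1), bern m j t • q j‖₊
      ≤ (range (m + n + 1)).sup fun i =>
          (Finset.Icc (i - m) (min n i)).sup fun j => ‖p j - q (i - j)‖₊ := by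
  rw [← NNReal.coe_le_coe, coe_nnnorm]
  refine norm_centerMass_sub_sum_smul_le (fun i hi => ?_) (sum_range_mul_bern_pos n hω ht)
    (fun j _ => bern_nonneg m j ht) (sum_range_bern m t) fun i hi j hj => ?_
  · exact mul_nonneg (hω i (Nat.lt_succ_iff.1 (mem_range.1 hi))).le (bern_nonneg n i ht)
  · exact_mod_cast le_sup_range_sup_Icc (Nat.lt_succ_iff.1 (mem_range.1 hi))
      (Nat.lt_succ_iff.1 (mem_range.1 hj)) fun l k => ‖p l - q k‖₊
end

section
/- Let M = m−(r+s+2) and 0 ≤ k ≤ M. Then t^{r+1}(1−t)^{s+1} J_k^{(r+1,s+1)}(2t−1) = Σ_{i=0}^k Σ_{j=i}^{M+i−k} (−1)^{k+i} [C(k+r+1,i) C(k+s+1,k−i) C(M−k, j−i) / C(m, r+j+1)] B_{r+j+1}^m(t), expressing the weighted Jacobi polynomial in the Bernstein basis of degree m. -/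
open Finset

/-- The shifted Jacobi polynomial `J_k^(α,β)(2t-1)`, via the standard hypergeometric
expansion `P_k^(α,β)(x) = ∑ₛ C(k+α, k-s) C(k+β, s) ((x-1)/2)^s ((x+1)/2)^(k-s)`. -/
noncomputable def jacobiShift (k α β : ℕ) (t : ℝ) : ℝ :=
  ∑ s ∈ range (k + 1),
    ((k + α).choose (k - s) : ℝ) * ((k + β).choose s) * (t - 1) ^ s * t ^ (k - s)

/-!
Reflecting the summation index turns `t^(r+1) (1-t)^(s+1) J_k^(r+1,s+1)(2t-1)` into a signed sum
of monomials `t^a (1-t)^b` with `a = r+1+i`, `b = s+1+k-i`. Multiplying such a monomial by the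
partition of unity `∑ₗ B_l^n(t) = 1`, `n = m - (r+s+2) - k`, lifts it to degree
`a + b + n = m`, since `t^a (1-t)^b B_l^n(t) = C(n,l) / C(m,a+l) · B_(a+l)^m(t)`; then `j = i + l`.
-/

theorem bern_eq_eval_bernsteinPolynomial (n i : ℕ) (t : ℝ) :
    bern n i t = (bernsteinPolynomial ℝ n i).eval t := by
  simp [bern, bernsteinPolynomial]

theorem sum_bern_eq_one (n : ℕ) (t : ℝ) : ∑ l ∈ range (n + 1), bern n l t = 1 := by
  simp_rw [bern_eq_eval_bernsteinPolynomial, ← Polynomial.eval_finsetSum,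
    bernsteinPolynomial.sum, Polynomial.eval_one]

theorem pow_mul_pow_mul_bern {a b n l : ℕ} (hl : l ≤ n) (t : ℝ) :
    t ^ a * (1 - t) ^ b * bern n l t
      = (n.choose l : ℝ) / ((a + b + n).choose (a + l)) * bern (a + b + n) (a + l) t := by
  have hchoose : ((a + b + n).choose (a + l) : ℝ) ≠ 0 := by
    exact_mod_cast (Nat.choose_pos (by omega)).ne'
  rw [bern, bern, show a + b + n - (a + l) = b + (n - l) by omega]
  field_simp
  ring

theorem pow_mul_pow_eq_sum_bern {a b n N : ℕ} (hN : a + b + n = N) (t : ℝ) :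
    t ^ a * (1 - t) ^ b
      = ∑ l ∈ range (n + 1), (n.choose l : ℝ) / (N.choose (a + l)) * bern N (a + l) t := by
  subst hN
  calc t ^ a * (1 - t) ^ b = t ^ a * (1 - t) ^ b * ∑ l ∈ range (n + 1), bern n l t := by
        rw [sum_bern_eq_one, mul_one]
    _ = _ := by
        rw [mul_sum]
        exact sum_congr rfl fun l hl =>
          pow_mul_pow_mul_bern (Nat.lt_succ_iff.mp (mem_range.mp hl)) t

theorem jacobiShift_eq_sum (k α β : ℕ) (t : ℝ) :
    jacobiShift k α β t = ∑ i ∈ range (k + 1),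
      (-1 : ℝ) ^ (k + i) * (k + α).choose i * (k + β).choose (k - i)
        * t ^ i * (1 - t) ^ (k - i) := by
  rw [jacobiShift, ← sum_range_reflect]
  refine sum_congr rfl fun i hi => ?_
  have hik : i ≤ k := Nat.lt_succ_iff.mp (mem_range.mp hi)
  have hsign : (-1 : ℝ) ^ (k + i) = (-1) ^ (k - i) := by
    rw [show k + i = (k - i) + 2 * i by omega, pow_add, pow_mul, neg_one_sq, one_pow, mul_one]
  rw [Nat.add_sub_cancel, show k - (k - i) = i by omega, hsign,
    show t - 1 = -1 * (1 - t) by ring, mul_pow]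
  ring

theorem weighted_jacobi_in_bernstein_basis (m r s k : ℕ) (hm : r + s + 2 ≤ m)
    (hk : k ≤ m - (r + s + 2)) (t : ℝ) :
    t ^ (r + 1) * (1 - t) ^ (s + 1) * jacobiShift k (r + 1) (s + 1) t
      = ∑ i ∈ range (k + 1), ∑ j ∈ Finset.Icc i (m - (r + s + 2) + i - k),
          (-1:ℝ) ^ (k + i) * ((k + r + 1).choose i) * ((k + s + 1).choose (k - i))
            * ((m - (r + s + 2) - k).choose (j - i)) / (m.choose (r + j + 1))
            * bern m (r + j + 1) t := by
  rw [jacobiShift_eq_sum, mul_sum]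
  refine sum_congr rfl fun i hi => ?_
  have hik : i ≤ k := Nat.lt_succ_iff.mp (mem_range.mp hi)
  set c : ℝ := (-1) ^ (k + i) * ((k + r + 1).choose i) * ((k + s + 1).choose (k - i))
  have hdeg : r + 1 + i + (s + 1 + (k - i)) + (m - (r + s + 2) - k) = m := by omega
  calc t ^ (r + 1) * (1 - t) ^ (s + 1)
        * ((-1) ^ (k + i) * (k + (r + 1)).choose i * (k + (s + 1)).choose (k - i)
          * t ^ i * (1 - t) ^ (k - i))
      = c * (t ^ (r + 1 + i) * (1 - t) ^ (s + 1 + (k - i))) := by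
        simp only [c, ← add_assoc]
        ring
    _ = _ := by
        rw [pow_mul_pow_eq_sum_bern hdeg, mul_sum, ← Ico_add_one_right_eq_Icc,
          sum_Ico_eq_sum_range,
          show m - (r + s + 2) + i - k + 1 - i = m - (r + s + 2) - k + 1 by omega]
        refine sum_congr rfl fun l _ => ?_
        rw [Nat.add_sub_cancel_left, show r + (i + l) + 1 = r + 1 + i + l by omega]
        ring
end

section
/- For integers n, k, i, j, r, s, l with the appropriate ranges, ∫₀¹ t^{s+1}(1−t)^{r+1} J_j^{(r+1,s+1)}(2t−1) B_i^{n+k}(t) dt = Σ_{l=0}^j (−1)^{j+l} C(j+r+1, l) C(j+s+1, j−l) C(n+k, i) / [ (n+k+r+s+j+3) C(n+k+r+s+j+2, i+s+l+1) ]. -/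
/-!
Multiplying out, the integrand is a finite combination of monomials `t ^ a * (1 - t) ^ b`
with `a + b = n + k + r + s + j + 2`, so the integral is a sum of
Beta integrals `a! b! / (a + b + 1)! = 1 / ((a + b + 1) * C(a + b, a))`. Reflecting the summation
index `l ↦ j - l` puts the sum in the stated form.
-/

open Finset

open intervalIntegral
open scoped Nat

lemma intervalIntegrable_pow_mul_one_sub_pow (a b : ℕ) :
    IntervalIntegrable (fun t : ℝ => t ^ a * (1 - t) ^ b) MeasureTheory.volume 0 1 :=
  (by fun_prop : Continuous fun t : ℝ => t ^ a * (1 - t) ^ b).intervalIntegrable 0 1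

lemma hasDerivAt_pow_succ_mul_one_sub_pow_succ (a b : ℕ) (t : ℝ) :
    HasDerivAt (fun t : ℝ => t ^ (a + 1) * (1 - t) ^ (b + 1))
      ((a + 1) * (t ^ a * (1 - t) ^ (b + 1)) - (b + 1) * (t ^ (a + 1) * (1 - t) ^ b)) t := by
  have hleft : HasDerivAt (fun t : ℝ => t ^ (a + 1)) ((a + 1) * t ^ a) t := by
    simpa using hasDerivAt_pow (a + 1) t
  have hright : HasDerivAt (fun t : ℝ => (1 - t) ^ (b + 1)) (-((b + 1) * (1 - t) ^ b)) t := by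
    simpa using ((hasDerivAt_id t).const_sub 1).fun_pow (b + 1)
  refine (hleft.mul hright).congr_deriv ?_
  ring

lemma succ_mul_integral_pow_mul_one_sub_pow_succ (a b : ℕ) :
    (a + 1) * ∫ t in (0:ℝ)..1, t ^ a * (1 - t) ^ (b + 1)
      = (b + 1) * ∫ t in (0:ℝ)..1, t ^ (a + 1) * (1 - t) ^ b := by
  have hintegrable := fun a b => intervalIntegrable_pow_mul_one_sub_pow a b
  have hFTC := integral_eq_sub_of_hasDerivAt
    (fun t _ => hasDerivAt_pow_succ_mul_one_sub_pow_succ a b t)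
    (((hintegrable a (b + 1)).const_mul _).sub ((hintegrable (a + 1) b).const_mul _))
  rw [integral_sub ((hintegrable a (b + 1)).const_mul _) ((hintegrable (a + 1) b).const_mul _),
    integral_const_mul, integral_const_mul] at hFTC
  norm_num at hFTC
  linarith

theorem integral_pow_mul_one_sub_pow (a b : ℕ) :
    ∫ t in (0:ℝ)..1, t ^ a * (1 - t) ^ b = (a ! * b ! : ℝ) / (a + b + 1)! := by
  induction b generalizing a with
  | zero =>
    simp only [pow_zero, mul_one, integral_pow, Nat.factorial_zero, add_zero, Nat.factorial_succ,
      one_pow, ne_eq, Nat.add_one_ne_zero, not_false_eq_true, zero_pow, sub_zero]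
    push_cast
    field_simp
  | succ b ih =>
    have hrec := succ_mul_integral_pow_mul_one_sub_pow_succ a b
    rw [ih (a + 1), show a + 1 + b + 1 = a + (b + 1) + 1 by omega] at hrec
    rw [← mul_right_inj' (by positivity : (a + 1 : ℝ) ≠ 0), hrec]
    simp only [Nat.factorial_succ, Nat.cast_mul, Nat.cast_succ]
    field_simp

theorem integral_pow_mul_one_sub_pow_eq_inv_mul_choose {a b N : ℕ} (h : a + b = N) :
    ∫ t in (0:ℝ)..1, t ^ a * (1 - t) ^ b = 1 / ((N + 1) * N.choose a) := by
  have hchoose : (N.choose a * a ! * b ! : ℝ) = N ! := by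
    have := Nat.choose_mul_factorial_mul_factorial (show a ≤ N by omega)
    rw [show N - a = b by omega] at this
    exact_mod_cast this
  have hpos : (0 : ℝ) < N.choose a := by
    exact_mod_cast Nat.choose_pos (show a ≤ N by omega)
  rw [integral_pow_mul_one_sub_pow, h, Nat.factorial_succ, Nat.cast_mul, Nat.cast_succ, ← hchoose]
  field_simp

lemma pow_mul_one_sub_pow_mul_jacobiShift_mul_bern (n i j α β : ℕ) (t : ℝ) :
    t ^ β * (1 - t) ^ α * jacobiShift j α β t * bern n i t
      = ∑ p ∈ range (j + 1),
          (-1:ℝ) ^ p * (j + α).choose (j - p) * (j + β).choose p * n.choose i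
            * (t ^ (i + β + (j - p)) * (1 - t) ^ (n - i + α + p)) := by
  rw [jacobiShift, bern, mul_sum, sum_mul]
  refine sum_congr rfl fun p _ => ?_
  rw [show t - 1 = -(1 - t) by ring, neg_pow]
  ring

theorem weighted_jacobi_bernstein_integral (n k i j r s : ℕ) (hi : i ≤ n + k) :
    ∫ t in (0:ℝ)..1,
        t ^ (s + 1) * (1 - t) ^ (r + 1) * jacobiShift j (r + 1) (s + 1) t * bern (n + k) i t
      = ∑ l ∈ range (j + 1),
          (-1:ℝ) ^ (j + l) * ((j + r + 1).choose l) * ((j + s + 1).choose (j - l))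
            * ((n + k).choose i)
            / ((n + k + r + s + j + 3) * ((n + k + r + s + j + 2).choose (i + s + l + 1))) := by
  simp_rw [pow_mul_one_sub_pow_mul_jacobiShift_mul_bern]
  rw [integral_finsetSum fun p _ => (intervalIntegrable_pow_mul_one_sub_pow _ _).const_mul _,
    ← sum_range_reflect]
  refine sum_congr rfl fun l hl => ?_
  have hlj : l ≤ j := Nat.lt_succ_iff.mp (mem_range.mp hl)
  rw [integral_const_mul, integral_pow_mul_one_sub_pow_eq_inv_mul_choose
    (N := n + k + r + s + j + 2) (by omega)]
  have hsign : (-1:ℝ) ^ (j + l) = (-1) ^ (j - l) := by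
    rw [show j + l = (j - l) + 2 * l by omega, pow_add, pow_mul, neg_one_sq, one_pow, mul_one]
  rw [show j + 1 - 1 - l = j - l by omega, show j - (j - l) = l by omega,
    show i + (s + 1) + l = i + s + l + 1 by omega, ← add_assoc j r, ← add_assoc j s, hsign]
  push_cast
  ring
end

section
/- Under the C^{(r,s)}-continuity condition between the rational Bézier curve x(t) = Σ P_i B_i^n(t) / Σ ω_i B_i^n(t) and the Bézier curve y(t) = Σ q_j B_j^m(t) (with ω_0 > 0, 0 < r+s < min(m,n)), the constrained control point q_r is uniquely determined by q_0, …, q_{r−1} via: q_r = (1/(ω_0 C(m,r))) { C(n,r) Δ^r P_0 − Σ_{i=0}^{r−1} [ C(m,i) C(n,r−i) ω_{r−i} q_i + (−1)^{r+i} C(m+n,r) C(r,i) C_i^0 ] }, where C_i^0 = Σ_{j=0}^i (C(m,j)C(n,i−j)/C(m+n,i)) ω_{i−j} q_j. I.e., with this choice of q_r, the k-th derivatives of the polynomial identity P(t) = ω(t)y(t) match at t = 0 for all k ≤ r. -/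
open Finset

/-!
Both terms of `P(t) - ω(t) y(t)` are Bézier curves: `P` of degree `n`, and `ω y` of degree
`m + n`, since `B_i^n B_j^m = C(n,i) C(m,j) / C(m+n,i+j) · B_{i+j}^{m+n}`, with control points
the paper's `C_l^0`. The `k`-th derivative at `0` of a Bézier curve of degree `N` with control
points `c` is `N!/(N-k)! · Δ^k c_0`, because differentiating lowers the degree by one and replaces
the control points by their forward differences. Cleared of denominators, the formula for
`q_k` says exactly `C(m+n,k) Δ^k C_0^0 = C(n,k) Δ^k P_0`, so the two derivatives cancel.
-/

lemma bern_eq_zero_of_lt {n i : ℕ} (h : n < i) (t : ℝ) : bern n i t = 0 := by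
  simp [bern, Nat.choose_eq_zero_of_lt h]

lemma bern_at_zero (n i : ℕ) : bern n i 0 = if i = 0 then 1 else 0 := by
  rcases i with _ | i <;> simp [bern]

lemma eval_bernsteinPolynomial (n i : ℕ) (t : ℝ) :
    (bernsteinPolynomial ℝ n i).eval t = bern n i t := by
  simp [bern, bernsteinPolynomial]

-- No side conditions: if `i + j > m + n` then `i > n` or `j > m`, and both sides vanish.
lemma bern_mul_bern (n m i j : ℕ) (t : ℝ) :
    bern n i t * bern m j t
      = n.choose i * m.choose j / (m + n).choose (i + j) * bern (m + n) (i + j) t := by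
  by_cases hij : i ≤ n ∧ j ≤ m
  · have hchoose : ((m + n).choose (i + j) : ℝ) ≠ 0 := by
      exact_mod_cast (Nat.choose_pos (by omega)).ne'
    rw [bern, bern, bern, show m + n - (i + j) = (n - i) + (m - j) by omega]
    field_simp
    ring
  · rcases not_and_or.mp hij with hi | hj
    · simp [bern_eq_zero_of_lt (not_le.mp hi), Nat.choose_eq_zero_of_lt (not_le.mp hi)]
    · simp [bern_eq_zero_of_lt (not_le.mp hj), Nat.choose_eq_zero_of_lt (not_le.mp hj)]

section Bezier

variable {E : Type*} [NormedAddCommGroup E] [NormedSpace ℝ E]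

noncomputable def bezier (N : ℕ) (c : ℕ → E) (t : ℝ) : E :=
  ∑ i ∈ range (N + 1), bern N i t • c i

lemma bezier_at_zero (N : ℕ) (c : ℕ → E) : bezier N c 0 = c 0 := by
  simp [bezier, bern_at_zero]

lemma contDiff_bezier {k : WithTop ℕ∞} (N : ℕ) (c : ℕ → E) : ContDiff ℝ k (bezier N c) := by
  unfold bezier bern
  fun_prop

lemma deriv_bezier_succ (N : ℕ) (c : ℕ → E) :
    deriv (bezier (N + 1) c) = (N + 1 : ℝ) • bezier N (fwdDiff 1 c) := by
  ext t
  have hderiv : HasDerivAt (bezier (N + 1) c)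
      (∑ i ∈ range (N + 2),
        (Polynomial.derivative (bernsteinPolynomial ℝ (N + 1) i)).eval t • c i) t := by
    unfold bezier
    simp only [← eval_bernsteinPolynomial]
    exact HasDerivAt.fun_sum fun i _ => (Polynomial.hasDerivAt _ t).smul_const (c i)
  have hshift : ∑ i ∈ range (N + 1), bern N (i + 1) t • c (i + 1) + bern N 0 t • c 0
      = ∑ i ∈ range (N + 1), bern N i t • c i := by
    rw [← sum_range_succ' (fun i => bern N i t • c i), sum_range_succ,
      bern_eq_zero_of_lt (Nat.lt_succ_self N), zero_smul, add_zero]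
  rw [hderiv.deriv, sum_range_succ']
  simp only [bernsteinPolynomial.derivative_succ, bernsteinPolynomial.derivative_zero,
    Polynomial.eval_mul, Polynomial.eval_sub, Polynomial.eval_neg, Polynomial.eval_natCast,
    eval_bernsteinPolynomial, Nat.add_sub_cancel, Pi.smul_apply, bezier, fwdDiff, sub_smul,
    mul_smul, neg_smul, sum_sub_distrib, ← smul_sum, smul_sub]
  rw [← hshift]
  push_cast
  module

theorem iteratedDeriv_bezier_at_zero (k N : ℕ) (c : ℕ → E) :
    iteratedDeriv k (bezier N c) 0 = (N.descFactorial k : ℝ) • (fwdDiff 1)^[k] c 0 := by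
  induction k generalizing N c with
  | zero => simp [bezier_at_zero]
  | succ k ih =>
    rcases N with _ | N
    · have hconst : bezier 0 c = fun _ => c 0 := by ext t; simp [bezier, bern]
      simp [iteratedDeriv_succ', hconst]
    · rw [iteratedDeriv_succ', deriv_bezier_succ, iteratedDeriv_const_smul_field, ih, smul_smul,
        Nat.succ_descFactorial_succ, Function.iterate_succ_apply, Nat.cast_mul, Nat.cast_succ]

lemma fwdDiff_iter_at_zero_eq_sum (k : ℕ) (c : ℕ → E) :
    (fwdDiff 1)^[k] c 0 = ∑ i ∈ range (k + 1), ((-1 : ℝ) ^ (k - i) * k.choose i) • c i := by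
  rw [fwdDiff_iter_eq_sum_shift]
  refine sum_congr rfl fun i _ => ?_
  rw [← Int.cast_smul_eq_zsmul ℝ]
  simp

end Bezier

lemma sum_range_sum_range_eq_sum_antidiagonal {M : Type*} [AddCommMonoid M] {m n : ℕ}
    (f : ℕ → ℕ → M) (hf : ∀ i j, n < i ∨ m < j → f i j = 0) :
    ∑ i ∈ range (n + 1), ∑ j ∈ range (m + 1), f i j
      = ∑ l ∈ range (m + n + 1), ∑ x ∈ antidiagonal l, f x.1 x.2 := by
  rw [← sum_product', ← sum_fiberwise_of_maps_to (g := fun x => x.1 + x.2)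
    (t := range (m + n + 1)) (by intro x hx; simp only [mem_product, mem_range] at hx ⊢; omega)]
  refine sum_congr rfl fun l _ => sum_subset (fun x hx => ?_) fun x hx hxs => hf _ _ ?_
  · simp only [mem_filter] at hx
    exact HasAntidiagonal.mem_antidiagonal.mpr hx.2
  · simp only [mem_filter, mem_product, mem_range, HasAntidiagonal.mem_antidiagonal] at hx hxs
    omega

lemma neg_one_pow_add_eq_neg_one_pow_sub {k i : ℕ} (h : i ≤ k) :
    (-1 : ℝ) ^ (k + i) = (-1) ^ (k - i) := by
  rw [show k + i = (k - i) + 2 * i by omega, pow_add, pow_mul]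
  simp

section Product

variable {E : Type*} [NormedAddCommGroup E] [NormedSpace ℝ E]

/-- The control points `C_l^0` of `ω(t) y(t)` as a Bézier curve of degree `m + n`. -/
noncomputable def bezierProductCoeff (m n : ℕ) (a : ℕ → ℝ) (v : ℕ → E) (l : ℕ) : E :=
  ∑ j ∈ range (l + 1),
    ((m.choose j : ℝ) * (n.choose (l - j)) / ((m + n).choose l) * a (l - j)) • v j

lemma choose_smul_bezierProductCoeff {m n l : ℕ} (hl : l ≤ m + n) (a : ℕ → ℝ) (v : ℕ → E) :
    ((m + n).choose l : ℝ) • bezierProductCoeff m n a v l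
      = ∑ j ∈ range (l + 1), ((m.choose j : ℝ) * n.choose (l - j) * a (l - j)) • v j := by
  have hchoose : ((m + n).choose l : ℝ) ≠ 0 := by exact_mod_cast (Nat.choose_pos hl).ne'
  rw [bezierProductCoeff, smul_sum]
  refine sum_congr rfl fun j _ => ?_
  rw [smul_smul]
  congr 1
  field_simp

theorem bezier_smul_bezier (m n : ℕ) (a : ℕ → ℝ) (v : ℕ → E) (t : ℝ) :
    bezier n a t • bezier m v t = bezier (m + n) (bezierProductCoeff m n a v) t := by
  have hvanish : ∀ i j, n < i ∨ m < j → (bern n i t * a i * bern m j t) • v j = 0 := by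
    rintro i j (hi | hj) <;> simp [bern_eq_zero_of_lt, *]
  calc bezier n a t • bezier m v t
      = ∑ i ∈ range (n + 1), ∑ j ∈ range (m + 1), (bern n i t * a i * bern m j t) • v j := by
        rw [bezier, bezier, sum_smul]
        simp only [smul_sum, smul_smul, smul_eq_mul]
    _ = ∑ l ∈ range (m + n + 1), ∑ x ∈ antidiagonal l,
          (bern n x.1 t * a x.1 * bern m x.2 t) • v x.2 :=
        sum_range_sum_range_eq_sum_antidiagonal _ hvanish
    _ = bezier (m + n) (bezierProductCoeff m n a v) t := by
        refine sum_congr rfl fun l _ => ?_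
        rw [← Nat.sum_antidiagonal_swap]
        simp only [Prod.fst_swap, Prod.snd_swap]
        rw [Nat.sum_antidiagonal_eq_sum_range_succ
          (fun j i => (bern n i t * a i * bern m j t) • v j), bezierProductCoeff, smul_sum]
        refine sum_congr rfl fun j hj => ?_
        have hjl : l - j + j = l := Nat.sub_add_cancel (Nat.lt_succ_iff.mp (mem_range.mp hj))
        rw [smul_smul, mul_right_comm, bern_mul_bern, hjl]
        congr 1
        ring

lemma choose_smul_fwdDiff_iter_bezierProductCoeff {m n k : ℕ} (hkm : k ≤ m) {ω : ℕ → ℝ}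
    (hω : ω 0 ≠ 0) {q : ℕ → E} (u : E)
    (hq : q k = (ω 0 * (m.choose k : ℝ))⁻¹ •
      ((n.choose k : ℝ) • u
        - ∑ i ∈ range k,
            (((m.choose i : ℝ) * (n.choose (k - i)) * ω (k - i)) • q i
              + ((-1:ℝ) ^ (k + i) * ((m + n).choose k) * (k.choose i)) •
                  bezierProductCoeff m n ω q i))) :
    ((m + n).choose k : ℝ) • (fwdDiff 1)^[k] (bezierProductCoeff m n ω q) 0
      = (n.choose k : ℝ) • u := by
  have hlead : ω 0 * (m.choose k : ℝ) ≠ 0 :=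
    mul_ne_zero hω (by exact_mod_cast (Nat.choose_pos hkm).ne')
  have hlast : ((m + n).choose k : ℝ) • bezierProductCoeff m n ω q k
      = ∑ i ∈ range k, ((m.choose i : ℝ) * (n.choose (k - i)) * ω (k - i)) • q i
        + (ω 0 * (m.choose k : ℝ)) • q k := by
    rw [choose_smul_bezierProductCoeff (by omega), sum_range_succ, Nat.sub_self,
      Nat.choose_zero_right, Nat.cast_one, mul_one, mul_comm (ω 0)]
  have hsign : ∀ i ∈ range k, ((-1:ℝ) ^ (k + i) * ((m + n).choose k) * (k.choose i)) •
      bezierProductCoeff m n ω q i = ((m + n).choose k : ℝ) •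
        ((-1 : ℝ) ^ (k - i) * k.choose i) • bezierProductCoeff m n ω q i := by
    intro i hi
    rw [neg_one_pow_add_eq_neg_one_pow_sub (mem_range.mp hi).le, smul_smul]
    congr 1
    ring
  rw [hq, smul_inv_smul₀ hlead, sum_add_distrib, sum_congr rfl hsign] at hlast
  rw [fwdDiff_iter_at_zero_eq_sum, sum_range_succ, Nat.sub_self, Nat.choose_self, pow_zero,
    Nat.cast_one, mul_one, one_smul, smul_add, hlast, smul_sum]
  abel

end Product

theorem constrained_control_points_at_zero_general (d m n r s : ℕ)
    (hrs' : r + s < min m n)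
    (ω : ℕ → ℝ) (hω : ∀ i ≤ n, 0 < ω i)
    (p q : ℕ → EuclideanSpace ℝ (Fin d))
    (hq : ∀ k ≤ r, q k = (ω 0 * (m.choose k : ℝ))⁻¹ •
      ((n.choose k : ℝ) •
          (∑ i ∈ range (k + 1), ((-1:ℝ) ^ (k - i) * (k.choose i)) • (ω i • p i))
        - ∑ i ∈ range k,
            (((m.choose i : ℝ) * (n.choose (k - i)) * ω (k - i)) • q i
              + ((-1:ℝ) ^ (k + i) * ((m + n).choose k) * (k.choose i)) •
                  (∑ j ∈ range (i + 1),
                    ((m.choose j : ℝ) * (n.choose (i - j)) / ((m + n).choose i) * ω (i - j))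
                      • q j)))) :
    ∀ k ≤ r,
      iteratedDeriv k
        (fun t => (∑ i ∈ range (n + 1), bern n i t • (ω i • p i))
          - (∑ i ∈ range (n + 1), ω i * bern n i t) •
              ∑ j ∈ range (m + 1), bern m j t • q j) 0 = 0 := by
  intro k hk
  have hkm : k ≤ m := by omega
  have hcurve : (fun t => (∑ i ∈ range (n + 1), bern n i t • (ω i • p i))
      - (∑ i ∈ range (n + 1), ω i * bern n i t) • ∑ j ∈ range (m + 1), bern m j t • q j)
      = bezier n (fun i => ω i • p i) - bezier (m + n) (bezierProductCoeff m n ω q) := by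
    ext1 t
    simp_rw [Pi.sub_apply, ← bezier_smul_bezier, bezier, smul_eq_mul, mul_comm (ω _)]
  have hmatch := choose_smul_fwdDiff_iter_bezierProductCoeff hkm (hω 0 (Nat.zero_le n)).ne' _
    (hq k hk)
  rw [hcurve, iteratedDeriv_sub (contDiff_bezier _ _).contDiffAt (contDiff_bezier _ _).contDiffAt,
    iteratedDeriv_bezier_at_zero, iteratedDeriv_bezier_at_zero,
    Nat.descFactorial_eq_factorial_mul_choose, Nat.descFactorial_eq_factorial_mul_choose, Nat.cast_mul, Nat.cast_mul, mul_smul, mul_smul,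
    hmatch, fwdDiff_iter_at_zero_eq_sum, sub_self]

/-- With the constrained control points `q_0, …, q_r` chosen by formula (8) of the paper,
the numerator identity `P(t) - ω(t) y(t)` has vanishing derivatives at `t = 0` up to
order `r`, i.e. the rational Bézier curve and the Bézier curve meet with
`C^(r,·)`-continuity at `t = 0`. -/
theorem constrained_control_points_at_zero (d m n r s : ℕ)
    (hrs : 0 < r + s) (hrs' : r + s < min m n)
    (ω : ℕ → ℝ) (hω : ∀ i ≤ n, 0 < ω i)
    (p q : ℕ → EuclideanSpace ℝ (Fin d))
    (hq : ∀ k ≤ r, q k = (ω 0 * (m.choose k : ℝ))⁻¹ •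
      ((n.choose k : ℝ) •
          (∑ i ∈ range (k + 1), ((-1:ℝ) ^ (k - i) * (k.choose i)) • (ω i • p i))
        - ∑ i ∈ range k,
            (((m.choose i : ℝ) * (n.choose (k - i)) * ω (k - i)) • q i
              + ((-1:ℝ) ^ (k + i) * ((m + n).choose k) * (k.choose i)) •
                  (∑ j ∈ range (i + 1),
                    ((m.choose j : ℝ) * (n.choose (i - j)) / ((m + n).choose i) * ω (i - j))
                      • q j)))) :
    ∀ k ≤ r,
      iteratedDeriv k
        (fun t => (∑ i ∈ range (n + 1), bern n i t • (ω i • p i))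
          - (∑ i ∈ range (n + 1), ω i * bern n i t) •
              ∑ j ∈ range (m + 1), bern m j t • q j) 0 = 0 :=
  constrained_control_points_at_zero_general d m n r s hrs' ω hω p q hq
end
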